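/- arXiv:2008.06852 — 12 statements merged into one kernel-verified Lean document; each statement's English description precedes it below -/
import Mathlib

section
/- Let S be a finite E-Ehresmann semigroup with subsemilattice of projections E. The following are equivalent: (1) S is EI-Ehresmann; (2) every idempotent f ∈ S satisfies f*·f·f⁺ = f*·f⁺; (3) for every idempotent f ∈ S the element f*·f⁺ is an inverse of f, that is, f·(f*·f⁺)·f = f and (f*·f⁺)·f·(f*·f⁺) = f*·f⁺; (4) every idempotent f ∈ S belongs to the sandwich set S(f*, f⁺). -/
def LtRel {S : Type*} [Semigroup S] (E : Set S) (a b : S) : Prop :=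
  ∀ e ∈ E, (a * e = a ↔ b * e = b)

def RtRel {S : Type*} [Semigroup S] (E : Set S) (a b : S) : Prop :=
  ∀ e ∈ E, (e * a = a ↔ e * b = b)

def HtRel {S : Type*} [Semigroup S] (E : Set S) (a b : S) : Prop :=
  LtRel E a b ∧ RtRel E a b

/-- An `E`-Ehresmann structure on a semigroup `S`: `E` is a subsemilattice
(commutative set of idempotents closed under multiplication), every `Lt`-class
and every `Rt`-class contains exactly one element of `E` (denoted `star a` and
`plus a` respectively), `Lt` is a right congruence and `Rt` is a left congruence
(expressed by the identities `(ab)* = (a*b)*` and `(ab)⁺ = (ab⁺)⁺`). -/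
structure Ehresmann (S : Type*) [Semigroup S] (E : Set S) where
  star : S → S
  plus : S → S
  idem : ∀ e ∈ E, e * e = e
  comm : ∀ e ∈ E, ∀ f ∈ E, e * f = f * e
  mul_mem : ∀ e ∈ E, ∀ f ∈ E, e * f ∈ E
  star_mem : ∀ a : S, star a ∈ E
  star_lt : ∀ a : S, LtRel E a (star a)
  star_unique : ∀ a : S, ∀ f ∈ E, LtRel E a f → f = star a
  plus_mem : ∀ a : S, plus a ∈ E
  plus_rt : ∀ a : S, RtRel E a (plus a)
  plus_unique : ∀ a : S, ∀ f ∈ E, RtRel E a f → f = plus a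
  star_congr : ∀ a b : S, star (a * b) = star (star a * b)
  plus_congr : ∀ a b : S, plus (a * b) = plus (a * plus b)

def RightRestriction {S : Type*} [Semigroup S] {E : Set S} (M : Ehresmann S E) : Prop :=
  ∀ e ∈ E, ∀ a : S, e * a = a * M.star (e * a)

def LeftRestriction {S : Type*} [Semigroup S] {E : Set S} (M : Ehresmann S E) : Prop :=
  ∀ e ∈ E, ∀ a : S, a * e = M.plus (a * e) * a

/-- A subset `G` of a semigroup is a group under the semigroup multiplication. -/
def IsGroupSubset {S : Type*} [Semigroup S] (G : Set S) : Prop :=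
  (∀ a ∈ G, ∀ b ∈ G, a * b ∈ G) ∧
  ∃ u ∈ G, (∀ a ∈ G, u * a = a ∧ a * u = a) ∧
    (∀ a ∈ G, ∃ b ∈ G, a * b = u ∧ b * a = u)

/-- `S` is EI-Ehresmann (w.r.t. `E`) when every `Ht`-class of a projection is a group. -/
def EIEhresmann {S : Type*} [Semigroup S] (E : Set S) : Prop :=
  ∀ e ∈ E, IsGroupSubset {a : S | HtRel E a e}

def SandwichSet {S : Type*} [Semigroup S] (f₁ f₂ : S) : Set S :=
  {h : S | h * h = h ∧ f₂ * h * f₁ = h ∧ f₁ * h * f₂ = f₁ * f₂}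

def GreenR {S : Type*} [Semigroup S] (a b : S) : Prop :=
  insert a {x : S | ∃ s, a * s = x} = insert b {x : S | ∃ s, b * s = x}

def GreenL {S : Type*} [Semigroup S] (a b : S) : Prop :=
  insert a {x : S | ∃ s, s * a = x} = insert b {x : S | ∃ s, s * b = x}

def GreenJ {S : Type*} [Semigroup S] (a b : S) : Prop :=
  insert a ({x : S | ∃ s, a * s = x} ∪ {x : S | ∃ s, s * a = x} ∪
      {x : S | ∃ s t, s * a * t = x}) =
  insert b ({x : S | ∃ s, b * s = x} ∪ {x : S | ∃ s, s * b = x} ∪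
      {x : S | ∃ s t, s * b * t = x})

namespace StmtAux

variable {S : Type*} [Semigroup S]

/-- `pw a n = a ^ (n+1)` for a semigroup. -/
def pw (a : S) : ℕ → S
  | 0 => a
  | n + 1 => pw a n * a

lemma pw_succ (a : S) (n : ℕ) : pw a (n + 1) = pw a n * a := rfl

lemma mul_pw (a : S) (n : ℕ) : a * pw a n = pw a n * a := by
  induction n with
  | zero => rfl
  | succ n ih => rw [pw_succ, ← mul_assoc, ih]

lemma pw_add (a : S) (m t : ℕ) : pw a (m + t + 1) = pw a m * pw a t := by
  induction t with
  | zero => rfl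
  | succ t ih =>
    have h : m + (t + 1) + 1 = (m + t + 1) + 1 := by omega
    rw [h, pw_succ, ih, pw_succ, mul_assoc]

lemma pw_period (a : S) {i d : ℕ} (h : pw a (i + d) = pw a i) :
    ∀ (k m : ℕ), i ≤ m → pw a (m + k * d) = pw a m := by
  have step : ∀ t, pw a (i + t + d) = pw a (i + t) := by
    intro t
    induction t with
    | zero => simpa using h
    | succ t ih =>
      have e1 : i + (t + 1) + d = (i + t + d) + 1 := by omega
      have e2 : i + (t + 1) = (i + t) + 1 := by omega
      rw [e1, e2, pw_succ, pw_succ, ih]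
  have step' : ∀ m, i ≤ m → pw a (m + d) = pw a m := by
    intro m hm
    obtain ⟨t, rfl⟩ := Nat.exists_eq_add_of_le hm
    exact step t
  intro k
  induction k with
  | zero => intro m _; simp
  | succ k ih =>
    intro m hm
    have e1 : m + (k + 1) * d = (m + k * d) + d := by ring
    rw [e1, step' _ (le_trans hm (Nat.le_add_right _ _)), ih m hm]

lemma exists_idem_pw [Finite S] (a : S) :
    ∃ n, pw a n * pw a n = pw a n := by
  obtain ⟨i, j, hne, hij⟩ := Finite.exists_ne_map_eq_of_infinite (pw a)
  wlog hlt : i < j generalizing i j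
  · exact this j i hne.symm hij.symm (by omega)
  set d := j - i with hd
  have hd1 : 1 ≤ d := by omega
  have hper : pw a (i + d) = pw a i := by
    have : i + d = j := by omega
    rw [this, hij]
  set K := (i + 1) * d with hK
  have hK1 : i + 1 ≤ K := by
    calc i + 1 = (i + 1) * 1 := by ring
    _ ≤ (i + 1) * d := Nat.mul_le_mul_left _ hd1
  refine ⟨K - 1, ?_⟩
  have h1 : (K - 1) + (K - 1) + 1 = (K - 1) + (i + 1) * d := by omega
  rw [← pw_add, h1, pw_period a hper (i + 1) (K - 1) (by omega)]

end StmtAux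

section EhrAux

open StmtAux

variable {S : Type*} [Semigroup S] {E : Set S} (M : Ehresmann S E)

lemma mul_star_self (a : S) : a * M.star a = a :=
  (M.star_lt a (M.star a) (M.star_mem a)).mpr (M.idem _ (M.star_mem a))

lemma plus_mul_self (a : S) : M.plus a * a = a :=
  (M.plus_rt a (M.plus a) (M.plus_mem a)).mpr (M.idem _ (M.plus_mem a))

lemma star_of_mem {e : S} (he : e ∈ E) : M.star e = e :=
  (M.star_unique e e he (fun _ _ => Iff.rfl)).symm

lemma plus_of_mem {e : S} (he : e ∈ E) : M.plus e = e :=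
  (M.plus_unique e e he (fun _ _ => Iff.rfl)).symm

/-- Characterization of the Ht-class of a projection. -/
lemma mem_ht_iff {e : S} (he : e ∈ E) (a : S) :
    HtRel E a e ↔ M.star a = e ∧ M.plus a = e := by
  constructor
  · intro h
    exact ⟨(M.star_unique a e he h.1).symm, (M.plus_unique a e he h.2).symm⟩
  · rintro ⟨hs, hp⟩
    exact ⟨hs ▸ M.star_lt a, hp ▸ M.plus_rt a⟩

lemma ht_closed {e : S} (a b : S)
    (ha : M.star a = e ∧ M.plus a = e) (hb : M.star b = e ∧ M.plus b = e) :
    M.star (a * b) = e ∧ M.plus (a * b) = e := by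
  constructor
  · have heb : e * b = b := by rw [← hb.2]; exact plus_mul_self M b
    rw [M.star_congr, ha.1, heb, hb.1]
  · have hae : a * e = a := by rw [← ha.1]; exact mul_star_self M a
    rw [M.plus_congr, hb.2, hae, ha.2]

/-- The "(1')": every idempotent `f` with `f* = f⁺` equals `f*`.  Derived from (2). -/
lemma idem_eq_of_two
    (h2 : ∀ f : S, f * f = f → M.star f * f * M.plus f = M.star f * M.plus f)
    (f : S) (hf : f * f = f) (hsp : M.star f = M.plus f) : f = M.star f := by
  have hfp : f * M.plus f = f := by rw [← hsp]; exact mul_star_self M f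
  have h := h2 f hf
  rw [hsp, M.idem _ (M.plus_mem f)] at h
  have h2' : M.plus f * f * M.plus f = f := by
    rw [mul_assoc, hfp]; exact plus_mul_self M f
  rw [hsp]
  exact h2'.symm.trans h

/-- Any idempotent in a group subset equals the identity. -/
lemma idem_eq_unit {G : Set S} (_hG : IsGroupSubset G) {u : S}
    (_hu : u ∈ G) (hid : ∀ a ∈ G, u * a = a ∧ a * u = a)
    (hinv : ∀ a ∈ G, ∃ b ∈ G, a * b = u ∧ b * a = u)
    {f : S} (hfG : f ∈ G) (hf : f * f = f) : f = u := by
  obtain ⟨b, hbG, hfb, hbf⟩ := hinv f hfG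
  calc f = f * u := ((hid f hfG).2).symm
  _ = f * (f * b) := by rw [hfb]
  _ = f * f * b := by rw [mul_assoc]
  _ = f * b := by rw [hf]
  _ = u := hfb

end EhrAux


/-- For a finite `E`-Ehresmann semigroup the following are equivalent:
(1) `S` is EI-Ehresmann; (2) `f* f f⁺ = f* f⁺` for every idempotent `f`;
(3) `f* f⁺` is an inverse of `f` for every idempotent `f`;
(4) every idempotent `f` lies in the sandwich set `S(f*, f⁺)`. -/
theorem stmt0 {S : Type*} [Semigroup S] [Finite S] (E : Set S) (M : Ehresmann S E) :
    List.TFAE [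
      EIEhresmann E,
      ∀ f : S, f * f = f → M.star f * f * M.plus f = M.star f * M.plus f,
      ∀ f : S, f * f = f →
        f * (M.star f * M.plus f) * f = f ∧
        (M.star f * M.plus f) * f * (M.star f * M.plus f) = M.star f * M.plus f,
      ∀ f : S, f * f = f → f ∈ SandwichSet (M.star f) (M.plus f)] := by
  -- common abbreviations and facts for an idempotent f
  have key : ∀ f : S, f * f = f →
      f * (M.star f * M.plus f) * f = f ∧
      (M.star f * M.plus f) * f * (M.star f * M.plus f) = M.star f * f * M.plus f ∧
      M.plus f * f * M.star f = f := by
    intro f hf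
    have hfs : f * M.star f = f := mul_star_self M f
    have hpf : M.plus f * f = f := plus_mul_self M f
    refine ⟨?_, ?_, ?_⟩
    · calc f * (M.star f * M.plus f) * f = (f * M.star f) * (M.plus f * f) := by
            simp only [mul_assoc]
      _ = f * f := by rw [hfs, hpf]
      _ = f := hf
    · calc (M.star f * M.plus f) * f * (M.star f * M.plus f)
          = M.star f * ((M.plus f * f) * (M.star f * M.plus f)) := by
            simp only [mul_assoc]
      _ = M.star f * (f * (M.star f * M.plus f)) := by rw [hpf]
      _ = M.star f * ((f * M.star f) * M.plus f) := by simp only [mul_assoc]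
      _ = M.star f * (f * M.plus f) := by rw [hfs]
      _ = M.star f * f * M.plus f := by rw [mul_assoc]
    · calc M.plus f * f * M.star f = f * M.star f := by rw [hpf]
      _ = f := hfs
  tfae_have 2 → 3
  | h2, f, hf => by
    obtain ⟨k1, k2, _⟩ := key f hf
    exact ⟨k1, k2.trans (h2 f hf)⟩
  tfae_have 3 → 2
  | h3, f, hf => by
    obtain ⟨_, k2, _⟩ := key f hf
    exact k2.symm.trans (h3 f hf).2
  tfae_have 2 → 4
  | h2, f, hf => by
    obtain ⟨_, _, k3⟩ := key f hf
    exact ⟨hf, k3, h2 f hf⟩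
  tfae_have 4 → 2
  | h4, f, hf => (h4 f hf).2.2
  tfae_have 1 → 2
  | h1, f, hf => by
    set s := M.star f with hs
    set p := M.plus f with hp
    have hsp : s * p ∈ E := M.mul_mem _ (M.star_mem f) _ (M.plus_mem f)
    have hcomm : p * s = s * p := M.comm _ (M.plus_mem f) _ (M.star_mem f)
    have hfs : f * s = f := mul_star_self M f
    have hpf : p * f = f := plus_mul_self M f
    set g := s * f * p with hg
    -- g is idempotent
    have hgg : g * g = g := by
      calc g * g = s * f * (p * s) * f * p := by rw [hg]; simp only [mul_assoc]
      _ = s * f * (s * p) * f * p := by rw [hcomm]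
      _ = s * ((f * s) * ((p * f) * p)) := by simp only [mul_assoc]
      _ = s * (f * (f * p)) := by rw [hfs, hpf]
      _ = s * ((f * f) * p) := by simp only [mul_assoc]
      _ = s * f * p := by rw [hf, mul_assoc]
    -- star g = s * p
    have hstar_sf : M.star (s * f) = s := by
      have := M.star_congr f f
      rw [hf] at this
      exact this.symm
    have hstarg : M.star g = s * p := by
      rw [hg, M.star_congr (s * f) p, hstar_sf, star_of_mem M hsp]
    -- plus g = s * p
    have hplus_fp : M.plus (f * p) = p := by
      have := M.plus_congr f f
      rw [hf] at this
      exact this.symm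
    have hplusg : M.plus g = s * p := by
      rw [hg, mul_assoc, M.plus_congr s (f * p), hplus_fp, plus_of_mem M hsp]
    -- g and s*p are idempotents in the group Ht(s*p), hence both equal its unit
    obtain ⟨_, u, huG, hid, hinv⟩ := h1 (s * p) hsp
    have hgG : g ∈ {a : S | HtRel E a (s * p)} :=
      (mem_ht_iff M hsp g).mpr ⟨hstarg, hplusg⟩
    have hspG : (s * p) ∈ {a : S | HtRel E a (s * p)} :=
      (mem_ht_iff M hsp (s * p)).mpr ⟨star_of_mem M hsp, plus_of_mem M hsp⟩
    have hgu : g = u := idem_eq_unit ⟨fun a ha b hb => by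
        exact (mem_ht_iff M hsp _).mpr
          (ht_closed M a b ((mem_ht_iff M hsp a).mp ha) ((mem_ht_iff M hsp b).mp hb)),
        u, huG, hid, hinv⟩ huG hid hinv hgG hgg
    have hspu : s * p = u := idem_eq_unit ⟨fun a ha b hb => by
        exact (mem_ht_iff M hsp _).mpr
          (ht_closed M a b ((mem_ht_iff M hsp a).mp ha) ((mem_ht_iff M hsp b).mp hb)),
        u, huG, hid, hinv⟩ huG hid hinv hspG (M.idem _ hsp)
    rw [hgu]; exact hspu.symm
  tfae_have 2 → 1
  | h2, e, he => by
    constructor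
    · intro a ha b hb
      exact (mem_ht_iff M he _).mpr
        (ht_closed M a b ((mem_ht_iff M he a).mp ha) ((mem_ht_iff M he b).mp hb))
    · refine ⟨e, (mem_ht_iff M he e).mpr ⟨star_of_mem M he, plus_of_mem M he⟩, ?_, ?_⟩
      · intro a ha
        obtain ⟨hsa, hpa⟩ := (mem_ht_iff M he a).mp ha
        exact ⟨by rw [← hpa]; exact plus_mul_self M a,
               by rw [← hsa]; exact mul_star_self M a⟩
      · intro a ha
        -- powers of a stay in the class
        have hpow : ∀ n, M.star (StmtAux.pw a n) = e ∧ M.plus (StmtAux.pw a n) = e := by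
          intro n
          induction n with
          | zero => exact (mem_ht_iff M he a).mp ha
          | succ n ih =>
            exact ht_closed M _ _ ih ((mem_ht_iff M he a).mp ha)
        obtain ⟨n, hn⟩ := StmtAux.exists_idem_pw a
        have hpe : StmtAux.pw a n = e := by
          have h' := idem_eq_of_two M h2 (StmtAux.pw a n) hn
            (((hpow n).1).trans ((hpow n).2).symm)
          rw [h', (hpow n).1]
        match n, hn, hpe with
        | 0, hn, hpe =>
          -- a itself is idempotent, hence equals e
          refine ⟨e, (mem_ht_iff M he e).mpr ⟨star_of_mem M he, plus_of_mem M he⟩, ?_, ?_⟩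
          · show a * e = e
            rw [show (a : S) = e from hpe, M.idem _ he]
          · show e * a = e
            rw [show (a : S) = e from hpe, M.idem _ he]
        | Nat.succ m, hn, hpe =>
          refine ⟨StmtAux.pw a m, (mem_ht_iff M he _).mpr (hpow m), ?_, ?_⟩
          · rw [StmtAux.mul_pw]
            exact hpe
          · exact hpe
  tfae_finish
end

section
/- Let S be a finite right restriction E-Ehresmann semigroup. The following are equivalent: (1) S is EI-Ehresmann; (2) every idempotent f ∈ S satisfies f·f⁺ = f⁺; (3) every regular element a ∈ S is Green's R-equivalent to a⁺. -/
private def pw {S : Type*} [Semigroup S] (a : S) : ℕ → S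
  | 0 => a
  | n + 1 => pw a n * a

private lemma pw_mul {S : Type*} [Semigroup S] (a : S) (m n : ℕ) :
    pw a m * pw a n = pw a (m + n + 1) := by
  induction n with
  | zero => rfl
  | succ n ih =>
    show pw a m * (pw a n * a) = _
    rw [← mul_assoc, ih]
    rfl

private lemma exists_idem_pw {S : Type*} [Semigroup S] [Finite S] (a : S) :
    ∃ N, pw a N * pw a N = pw a N := by
  obtain ⟨i, j, hne, heq⟩ := Finite.exists_ne_map_eq_of_infinite (fun n : ℕ => pw a n)
  wlog h : i < j generalizing i j
  · exact this j i hne.symm heq.symm (by omega)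
  obtain ⟨d, rfl⟩ : ∃ d, j = i + (d + 1) := ⟨j - i - 1, by omega⟩
  have key : ∀ c, pw a (i + c + (d + 1)) = pw a (i + c) := by
    intro c
    cases c with
    | zero =>
      have : i + 0 + (d + 1) = i + (d + 1) := by omega
      rw [this, ← heq]
      rfl
    | succ c =>
      have e1 : i + (c + 1) + (d + 1) = (i + (d + 1)) + c + 1 := by omega
      rw [e1, ← pw_mul a (i + (d + 1)) c, ← heq, pw_mul a i c]
      rfl
  have key2 : ∀ k c, pw a (i + c + k * (d + 1)) = pw a (i + c) := by
    intro k
    induction k with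
    | zero => intro c; simp
    | succ k ih =>
      intro c
      have e1 : i + c + (k + 1) * (d + 1) = i + (c + (d + 1)) + k * (d + 1) := by ring
      have e2 : i + c + (d + 1) = i + (c + (d + 1)) := by omega
      rw [e1, ih (c + (d + 1)), ← e2, key c]
  refine ⟨i + (i + 1) * d, ?_⟩
  rw [pw_mul a]
  have e3 : i + (i + 1) * d + (i + (i + 1) * d) + 1
      = i + ((i + 1) * d) + (i + 1) * (d + 1) := by ring
  rw [e3, key2 (i + 1) ((i + 1) * d)]

/-- For a finite right restriction `E`-Ehresmann semigroup the following are
equivalent: (1) `S` is EI-Ehresmann; (2) `f f⁺ = f⁺` for every idempotent `f`;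
(3) every regular element `a` is Green's `R`-equivalent to `a⁺`. -/
theorem stmt1 {S : Type*} [Semigroup S] [Finite S] (E : Set S) (M : Ehresmann S E)
    (hRR : RightRestriction M) :
    List.TFAE [
      EIEhresmann E,
      ∀ f : S, f * f = f → f * M.plus f = M.plus f,
      ∀ a : S, (∃ b, a * b * a = a) → GreenR a (M.plus a)] := by
  -- basic consequences of the Ehresmann structure
  have hstar1 : ∀ a : S, a * M.star a = a := fun a =>
    (M.star_lt a (M.star a) (M.star_mem a)).mpr (M.idem _ (M.star_mem a))
  have hplus1 : ∀ a : S, M.plus a * a = a := fun a =>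
    (M.plus_rt a (M.plus a) (M.plus_mem a)).mpr (M.idem _ (M.plus_mem a))
  have hstarE : ∀ e ∈ E, M.star e = e := fun e he =>
    (M.star_unique e e he (fun _ _ => Iff.rfl)).symm
  have hplusE : ∀ e ∈ E, M.plus e = e := fun e he =>
    (M.plus_unique e e he (fun _ _ => Iff.rfl)).symm
  have hchar : ∀ e ∈ E, ∀ a : S, (HtRel E a e ↔ (M.star a = e ∧ M.plus a = e)) := by
    intro e he a
    constructor
    · rintro ⟨hl, hr⟩
      exact ⟨(M.star_unique a e he hl).symm, (M.plus_unique a e he hr).symm⟩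
    · rintro ⟨h1, h2⟩
      exact ⟨h1 ▸ M.star_lt a, h2 ▸ M.plus_rt a⟩
  tfae_have 1 → 2 := by
    intro hEI f hf
    -- s f = f, where s = star f
    have hsf : M.star f * f = f := by
      have h1 : M.star (M.star f * f) = M.star f := by
        have h := M.star_congr f f
        rw [hf] at h
        exact h.symm
      have h2 := hRR (M.star f) (M.star_mem f) f
      rw [h1] at h2
      rw [h2]
      exact hstar1 f
    -- s e = e
    have hse : M.star f * M.plus f = M.plus f := (M.plus_rt f _ (M.star_mem f)).mp hsf
    -- k := f * plus f lies in the Ht-class of e := plus f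
    have hstark : M.star (f * M.plus f) = M.plus f := by
      rw [M.star_congr f (M.plus f), hse, hstarE _ (M.plus_mem f)]
    have hplusk : M.plus (f * M.plus f) = M.plus f := by
      have h1 := M.plus_congr f f
      rw [hf] at h1
      exact h1.symm
    have hkG : HtRel E (f * M.plus f) (M.plus f) :=
      (hchar _ (M.plus_mem f) _).mpr ⟨hstark, hplusk⟩
    have hef : M.plus f * f = f := hplus1 f
    have hkk : (f * M.plus f) * (f * M.plus f) = f * M.plus f := by
      have : M.plus f * (f * M.plus f) = f * M.plus f := by
        rw [← mul_assoc, hef]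
      rw [mul_assoc, this, ← mul_assoc, hf]
    obtain ⟨hcl, u, huG, hid, hinv⟩ := hEI (M.plus f) (M.plus_mem f)
    have heG : HtRel E (M.plus f) (M.plus f) := ⟨fun _ _ => Iff.rfl, fun _ _ => Iff.rfl⟩
    have hue : u = M.plus f := by
      have h1 : u * M.plus f = M.plus f := (hid (M.plus f) heG).1
      have h2 : u * M.plus f = u := by
        have h3 := ((hchar _ (M.plus_mem f) u).mp huG).1
        rw [← h3]
        exact hstar1 u
      rw [← h2, h1]
    obtain ⟨b, hbG, hb1, hb2⟩ := hinv (f * M.plus f) hkG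
    rw [hue] at hb2
    calc f * M.plus f = M.plus f * (f * M.plus f) := by rw [← mul_assoc, hef]
      _ = (b * (f * M.plus f)) * (f * M.plus f) := by rw [hb2]
      _ = b * ((f * M.plus f) * (f * M.plus f)) := mul_assoc _ _ _
      _ = b * (f * M.plus f) := by rw [hkk]
      _ = M.plus f := hb2
  tfae_have 2 → 3 := by
    rintro h2 a ⟨b, hb⟩
    have hff : (a * b) * (a * b) = a * b := by rw [← mul_assoc, hb]
    have hpf : M.plus (a * b) * a = a := by
      have h := hplus1 (a * b)
      have h' : M.plus (a * b) * (a * b * a) = a * b * a := by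
        rw [← mul_assoc, h]
      rw [hb] at h'
      exact h'
    have h4 : M.plus (a * b) * M.plus a = M.plus a :=
      (M.plus_rt a _ (M.plus_mem (a * b))).mp hpf
    have h6 := h2 (a * b) hff
    have h5 : a * (b * M.plus a) = M.plus a := by
      rw [← mul_assoc, ← h4, ← mul_assoc, h6, h4]
    -- now prove the two principal right ideals coincide
    unfold GreenR
    ext x
    simp only [Set.mem_insert_iff, Set.mem_setOf_eq]
    constructor
    · rintro (h | ⟨s, h⟩)
      · exact Or.inr ⟨a, by rw [h]; exact hplus1 a⟩
      · exact Or.inr ⟨a * s, by rw [← mul_assoc, hplus1]; exact h⟩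
    · rintro (h | ⟨s, h⟩)
      · exact Or.inr ⟨b * M.plus a, by rw [h5]; exact h.symm⟩
      · exact Or.inr ⟨b * M.plus a * s, by rw [← mul_assoc, h5]; exact h⟩
  tfae_have 3 → 2 := by
    intro h3 f hf
    have hreg : ∃ b, f * b * f = f := ⟨f, by rw [hf, hf]⟩
    have hR := h3 f hreg
    unfold GreenR at hR
    have hmemp : M.plus f ∈ insert f {x : S | ∃ s, f * s = x} := by
      rw [hR]
      exact Set.mem_insert _ _
    rcases Set.mem_insert_iff.mp hmemp with h | ⟨s, hs⟩
    · rw [h, hf]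
    · rw [← hs, ← mul_assoc, hf]
  tfae_have 2 → 1 := by
    intro h2 e he
    have heG : HtRel E e e := ⟨fun _ _ => Iff.rfl, fun _ _ => Iff.rfl⟩
    have hcl : ∀ x ∈ {a : S | HtRel E a e}, ∀ y ∈ {a : S | HtRel E a e},
        x * y ∈ {a : S | HtRel E a e} := by
      intro x hx y hy
      obtain ⟨hx1, hx2⟩ := (hchar e he x).mp hx
      obtain ⟨hy1, hy2⟩ := (hchar e he y).mp hy
      have hey : e * y = y := by rw [← hy2]; exact hplus1 y
      refine (hchar e he _).mpr ⟨?_, ?_⟩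
      · rw [M.star_congr x y, hx1, hey, hy1]
      · rw [M.plus_congr x y, hy2, (show x * e = x from hx1 ▸ hstar1 x), hx2]
    refine ⟨hcl, e, heG, ?_, ?_⟩
    · intro x hx
      obtain ⟨hx1, hx2⟩ := (hchar e he x).mp hx
      constructor
      · rw [← hx2]; exact hplus1 x
      · rw [← hx1]; exact hstar1 x
    · intro x hx
      have hpow : ∀ n, pw x n ∈ {a : S | HtRel E a e} := by
        intro n
        induction n with
        | zero => exact hx
        | succ n ih => exact hcl _ ih x hx
      obtain ⟨N, hN⟩ := exists_idem_pw x
      have hge : pw x N = e := by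
        obtain ⟨hg1, hg2⟩ := (hchar e he _).mp (hpow N)
        have h6 := h2 (pw x N) hN
        rw [hg2] at h6
        have h7 : pw x N * e = pw x N := by rw [← hg1]; exact hstar1 _
        rw [← h7, h6]
      have hNN : pw x (N + N + 1) = e := by
        rw [← pw_mul x N N, hge, M.idem e he]
      refine ⟨pw x (N + N), hpow _, ?_, ?_⟩
      · have h8 : pw x 0 * pw x (N + N) = pw x (0 + (N + N) + 1) := pw_mul x 0 (N + N)
        have h9 : (0 : ℕ) + (N + N) + 1 = N + N + 1 := by omega
        rw [h9] at h8
        exact h8.trans hNN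
      · have h8 : pw x (N + N) * pw x 0 = pw x (N + N + 0 + 1) := pw_mul x (N + N) 0
        exact h8.trans hNN
  tfae_finish
end

section
/- Let S be an E-Ehresmann semigroup (not necessarily finite). Then S is EU-Ehresmann, i.e., for every e ∈ E the element e is the only idempotent in its Ht-class Ht(e), if and only if every idempotent f ∈ S satisfies f*·f·f⁺ = f*·f⁺. -/
/-- An `E`-Ehresmann semigroup (not necessarily finite) is EU-Ehresmann
(for every `e ∈ E`, `e` is the only idempotent in its `Ht`-class) iff every idempotent
`f` satisfies `f* f f⁺ = f* f⁺`. -/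
theorem stmt2 {S : Type*} [Semigroup S] (E : Set S) (M : Ehresmann S E) :
    (∀ e ∈ E, ∀ f : S, f * f = f → HtRel E f e → f = e) ↔
      (∀ f : S, f * f = f → M.star f * f * M.plus f = M.star f * M.plus f) := by
  have starE : ∀ e ∈ E, M.star e = e := fun e he =>
    (M.star_unique e e he (fun g _ => Iff.rfl)).symm
  have plusE : ∀ e ∈ E, M.plus e = e := fun e he =>
    (M.plus_unique e e he (fun g _ => Iff.rfl)).symm
  have mul_star : ∀ a : S, a * M.star a = a := fun a =>
    (M.star_lt a (M.star a) (M.star_mem a)).mpr (M.idem _ (M.star_mem a))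
  have plus_mul : ∀ a : S, M.plus a * a = a := fun a =>
    (M.plus_rt a (M.plus a) (M.plus_mem a)).mpr (M.idem _ (M.plus_mem a))
  constructor
  · intro hEU f hf
    set s := M.star f with hs
    set p := M.plus f with hp
    have hsE : s ∈ E := M.star_mem f
    have hpE : p ∈ E := M.plus_mem f
    have heE : s * p ∈ E := M.mul_mem s hsE p hpE
    have hfs : f * s = f := mul_star f
    have hpf : p * f = f := plus_mul f
    -- h := s * f * p is idempotent
    have hidem : (s * f * p) * (s * f * p) = s * f * p := by
      calc (s * f * p) * (s * f * p) = s * f * (p * s) * (f * p) := by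
            simp only [mul_assoc]
        _ = s * f * (s * p) * (f * p) := by rw [M.comm p hpE s hsE]
        _ = s * (f * s) * (p * (f * p)) := by simp only [mul_assoc]
        _ = s * f * (p * f * p) := by rw [hfs]; simp only [mul_assoc]
        _ = s * f * (f * p) := by rw [hpf]
        _ = s * (f * f) * p := by simp only [mul_assoc]
        _ = s * f * p := by rw [hf]
    -- star (s*f*p) = s*p
    have hsf : M.star (s * f) = s := by
      have : M.star f = M.star (s * f) := by
        conv_lhs => rw [← hf]
        rw [M.star_congr f f, ← hs]
      rw [← this]
    have hstar : M.star (s * f * p) = s * p := by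
      rw [M.star_congr (s * f) p, hsf, starE _ heE]
    have hfp : M.plus (f * p) = p := by
      have : M.plus f = M.plus (f * p) := by
        conv_lhs => rw [← hf]
        rw [M.plus_congr f f, ← hp]
      rw [← this]
    have hplus : M.plus (s * f * p) = s * p := by
      rw [mul_assoc, M.plus_congr s (f * p), hfp]
      exact plusE _ heE
    have hHt : HtRel E (s * f * p) (s * p) := by
      constructor
      · intro g hg
        rw [M.star_lt (s * f * p) g hg, hstar]
      · intro g hg
        rw [M.plus_rt (s * f * p) g hg, hplus]
    exact hEU (s * p) heE (s * f * p) hidem hHt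
  · intro hid e he f hf hHt
    have hfe : f * e = f := (hHt.1 e he).mpr (M.idem e he)
    have hef : e * f = f := (hHt.2 e he).mpr (M.idem e he)
    have hstar : M.star f = e := (M.star_unique f e he hHt.1).symm
    have hplus : M.plus f = e := (M.plus_unique f e he hHt.2).symm
    have := hid f hf
    rw [hstar, hplus, hef, hfe, M.idem e he] at this
    exact this
end

section
/- Let S be a right restriction E-Ehresmann semigroup (not necessarily finite). Then S is EU-Ehresmann, i.e., for every e ∈ E the element e is the only idempotent in its Ht-class Ht(e), if and only if every idempotent f ∈ S satisfies f·f⁺ = f⁺. -/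
/-- A right restriction `E`-Ehresmann semigroup (not necessarily finite) is
EU-Ehresmann (for every `e ∈ E`, `e` is the only idempotent in its `Ht`-class) iff every
idempotent `f` satisfies `f f⁺ = f⁺`. -/
theorem stmt3 {S : Type*} [Semigroup S] (E : Set S) (M : Ehresmann S E)
    (hRR : RightRestriction M) :
    (∀ e ∈ E, ∀ f : S, f * f = f → HtRel E f e → f = e) ↔
      (∀ f : S, f * f = f → f * M.plus f = M.plus f) := by
  have star_proj : ∀ d ∈ E, M.star d = d := fun d hd =>
    (M.star_unique d d hd (fun _ _ => Iff.rfl)).symm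
  constructor
  · intro hEU f hf
    have heE := M.plus_mem f
    have hsE := M.star_mem f
    have hfs : f * M.star f = f := (M.star_lt f _ hsE).mpr (M.idem _ hsE)
    have hef : M.plus f * f = f := (M.plus_rt f _ heE).mpr (M.idem _ heE)
    have h1 : M.star (M.star f * f) = M.star f := by
      have h := M.star_congr f f
      rw [hf] at h
      exact h.symm
    have hsf : M.star f * f = f := by
      have h := hRR (M.star f) hsE f
      rw [h1, hfs] at h
      exact h
    have hse : M.star f * M.plus f = M.plus f := (M.plus_rt f _ hsE).mp hsf
    have hplush : M.plus (f * M.plus f) = M.plus f := by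
      have h := M.plus_congr f f
      rw [hf] at h
      exact h.symm
    have hstarh : M.star (f * M.plus f) = M.plus f := by
      rw [M.star_congr f (M.plus f), hse, star_proj _ heE]
    have hhidem : (f * M.plus f) * (f * M.plus f) = f * M.plus f := by
      calc (f * M.plus f) * (f * M.plus f) = f * ((M.plus f * f) * M.plus f) := by
            rw [mul_assoc, ← mul_assoc (M.plus f) f (M.plus f)]
        _ = f * M.plus f := by rw [hef, ← mul_assoc, hf]
    have hl : LtRel E (f * M.plus f) (M.plus f) := by
      have h := M.star_lt (f * M.plus f); rwa [hstarh] at h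
    have hr : RtRel E (f * M.plus f) (M.plus f) := by
      have h := M.plus_rt (f * M.plus f); rwa [hplush] at h
    exact hEU (M.plus f) heE (f * M.plus f) hhidem ⟨hl, hr⟩
  · intro h2 e heE f hf hfe
    have he_star : e = M.star f := M.star_unique f e heE hfe.1
    have he_plus : e = M.plus f := M.plus_unique f e heE hfe.2
    have hfs : f * M.star f = f :=
      (M.star_lt f _ (M.star_mem f)).mpr (M.idem _ (M.star_mem f))
    rw [← he_star] at hfs
    have h3 : f * M.plus f = M.plus f := h2 f hf
    rw [← he_plus] at h3
    exact hfs.symm.trans h3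
end

section
/- Let S be a right restriction E-Ehresmann semigroup. Then every idempotent f ∈ S satisfies f*·f⁺ = f⁺; that is, f⁺ ≤ f* in the semilattice order on E. -/
/-- In a right restriction `E`-Ehresmann semigroup, every idempotent `f`
satisfies `f* f⁺ = f⁺`; that is, `f⁺ ≤ f*` in the semilattice order on `E`. -/
theorem stmt4 {S : Type*} [Semigroup S] (E : Set S) (M : Ehresmann S E)
    (hRR : RightRestriction M) :
    ∀ f : S, f * f = f → M.star f * M.plus f = M.plus f := by
  intro f hf
  have hs := M.star_mem f
  have ffs : f * M.star f = f := (M.star_lt f _ hs).mpr (M.idem _ hs)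
  have key : M.star f * f = f := by
    have h1 := hRR (M.star f) hs f
    have h2 : M.star (M.star f * f) = M.star f := by
      have h3 := M.star_congr f f
      rw [hf] at h3
      exact h3.symm
    rw [h2, ffs] at h1
    exact h1
  exact (M.plus_rt f (M.star f) hs).mp key
end

section
/- Let S be a finite right restriction EI-Ehresmann semigroup and let f ∈ S be an idempotent. Then every element h of the sandwich set S(f*, f⁺) satisfies fh = h and hf = f; in particular, every element of S(f*, f⁺) is Green's R-equivalent to f. -/
/-- In a finite right restriction EI-Ehresmann semigroup, for every
idempotent `f`, every `h` in the sandwich set `S(f*, f⁺)` satisfies `fh = h` and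
`hf = f`; in particular `h` is Green's `R`-equivalent to `f`. -/
theorem stmt5 {S : Type*} [Semigroup S] [Finite S] (E : Set S) (M : Ehresmann S E)
    (hRR : RightRestriction M) (hEI : EIEhresmann E) (f : S) (hf : f * f = f) :
    ∀ h ∈ SandwichSet (M.star f) (M.plus f), f * h = h ∧ h * f = f ∧ GreenR h f := by

  intro h hh
  obtain ⟨hh2, hghe, hehg⟩ := hh
  have heE : M.star f ∈ E := M.star_mem f
  have hgE : M.plus f ∈ E := M.plus_mem f
  set e := M.star f with hedef
  set g := M.plus f with hgdef
  -- basic facts about projections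
  have hstarE : ∀ p ∈ E, M.star p = p := fun p hp =>
    (M.star_unique p p hp (fun _ _ => Iff.rfl)).symm
  have hplusE : ∀ p ∈ E, M.plus p = p := fun p hp =>
    (M.plus_unique p p hp (fun _ _ => Iff.rfl)).symm
  have hfe : f * e = f := (M.star_lt f e heE).mpr (M.idem e heE)
  have hgf : g * f = f := (M.plus_rt f g hgE).mpr (M.idem g hgE)
  -- e * f = f
  have hsef : M.star (e * f) = e := by
    have h1 := M.star_congr f f
    rw [hf] at h1
    exact h1.symm
  have hef : e * f = f := by
    have h2 := hRR e heE f
    rw [hsef, hfe] at h2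
    exact h2
  -- u = f * g is idempotent, Rt-related to f, hence plus u = g
  have huu : (f * g) * (f * g) = f * g := by
    rw [mul_assoc, ← mul_assoc g f g, hgf, ← mul_assoc, hf]
  have huf : (f * g) * f = f := by
    rw [mul_assoc, hgf, hf]
  have hRtuf : RtRel E (f * g) f := by
    intro p hp
    constructor
    · intro hpu
      have : p * f = f := by
        calc p * f = p * ((f * g) * f) := by rw [huf]
        _ = (p * (f * g)) * f := (mul_assoc p (f * g) f).symm
        _ = (f * g) * f := by rw [hpu]
        _ = f := huf
      exact this
    · intro hpf
      calc p * (f * g) = (p * f) * g := by rw [mul_assoc]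
      _ = f * g := by rw [hpf]
  have hRtug : RtRel E (f * g) g := by
    intro p hp
    exact (hRtuf p hp).trans (M.plus_rt f p hp)
  have hpu : M.plus (f * g) = g := (M.plus_unique (f * g) g hgE hRtug).symm
  -- (e*g) * (f*g) = f*g
  have hqu : (e * g) * (f * g) = f * g := by
    calc (e * g) * (f * g) = e * (g * f) * g := by
          simp only [mul_assoc]
    _ = (e * f) * g := by rw [hgf]
    _ = f * g := by rw [hef]
  -- deduce e * g = g
  have hegE : e * g ∈ E := M.mul_mem e heE g hgE
  have heg : e * g = g := by
    have h3 : M.plus ((e * g) * (f * g)) = M.plus ((e * g) * g) := by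
      rw [M.plus_congr (e * g) (f * g), hpu]
    rw [hqu, hpu] at h3
    have h4 : (e * g) * g = e * g := by rw [mul_assoc, M.idem g hgE]
    rw [h4, hplusE (e * g) hegE] at h3
    exact h3.symm
  -- star (f*g) = g
  have hsu : M.star (f * g) = g := by
    rw [M.star_congr f g, ← hedef, heg, hstarE g hgE]
  -- f * g ∈ Ht(g), a group, and f * g idempotent, so f * g = g
  have hLtug : LtRel E (f * g) g := by
    have := M.star_lt (f * g)
    rw [hsu] at this
    exact this
  have hRtug' : RtRel E (f * g) g := by
    have := M.plus_rt (f * g)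
    rw [hpu] at this
    exact this
  have huHt : (f * g) ∈ {a : S | HtRel E a g} := ⟨hLtug, hRtug'⟩
  have hgHt : g ∈ {a : S | HtRel E a g} :=
    ⟨fun _ _ => Iff.rfl, fun _ _ => Iff.rfl⟩
  obtain ⟨hcl, w, hwG, hwid, hinv⟩ := hEI g hgE
  have hidem_eq_w : ∀ a ∈ {a : S | HtRel E a g}, a * a = a → a = w := by
    intro a haG haa
    obtain ⟨b, hbG, hab, hba⟩ := hinv a haG
    calc a = a * w := ((hwid a haG).2).symm
    _ = a * (a * b) := by rw [hab]
    _ = (a * a) * b := by rw [mul_assoc]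
    _ = a * b := by rw [haa]
    _ = w := hab
  have hfg : f * g = g := by
    rw [hidem_eq_w (f * g) huHt huu, hidem_eq_w g hgHt (M.idem g hgE)]
  -- now the conclusions
  have hgh : g * h = h := by
    calc g * h = g * (g * h * e) := by rw [hghe]
    _ = ((g * g) * h) * e := by rw [mul_assoc, ← mul_assoc, ← mul_assoc]
    _ = g * h * e := by rw [M.idem g hgE]
    _ = h := hghe
  have hfh : f * h = h := by
    calc f * h = f * (g * h) := by rw [hgh]
    _ = (f * g) * h := by rw [mul_assoc]
    _ = g * h := by rw [hfg]
    _ = h := hgh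
  have hhg : h * g = g := by
    calc h * g = (g * h) * g := by rw [hgh]
    _ = ((e * g) * h) * g := by rw [heg]
    _ = (e * (g * h)) * g := by rw [mul_assoc e g h]
    _ = (e * h) * g := by rw [hgh]
    _ = e * g := hehg
    _ = g := heg
  have hhf : h * f = f := by
    calc h * f = h * (g * f) := by rw [hgf]
    _ = (h * g) * f := by rw [mul_assoc]
    _ = g * f := by rw [hhg]
    _ = f := hgf
  refine ⟨hfh, hhf, ?_⟩
  unfold GreenR
  ext x
  simp only [Set.mem_insert_iff, Set.mem_setOf_eq]
  constructor
  · rintro (hx | ⟨s, rfl⟩)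
    · exact Or.inr ⟨h, by rw [hfh]; exact hx.symm⟩
    · exact Or.inr ⟨h * s, by rw [← mul_assoc, hfh]⟩
  · rintro (hx | ⟨s, rfl⟩)
    · exact Or.inr ⟨f, by rw [hhf]; exact hx.symm⟩
    · exact Or.inr ⟨f * s, by rw [← mul_assoc, hhf]⟩
end

section
/- Let S be a finite right restriction EI-Ehresmann semigroup that is regular (every element a ∈ S satisfies aba = a for some b ∈ S). Then there exists an injective map Φ from S into the monoid of partial functions on the underlying set of S such that for all a, b ∈ S: Φ(ab) = Φ(a) ∘ Φ(b), Φ(a*) is the partial identity on the domain of Φ(a), and Φ(a⁺) is the partial identity on the range of Φ(a). -/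
/-!
Represent `a` by left multiplication `x ↦ a * x` restricted to `{x | a* * x = x}`. The right
restriction law `a* * b = b * (a * b)*` makes this a homomorphism and `Φ(a*)` is visibly the
identity on the domain. For the range one needs `a⁺ ∈ a * S`: if `a * b * a = a`, then
`u = a * b * a⁺` is `Ht`-related to `a⁺`, so it is invertible in the group `Ht(a⁺)`, whose
identity is `a⁺`.
-/

theorem rtRel_of_mul_eq {S : Type*} [Semigroup S] {E : Set S} {a b s t : S}
    (hs : a * s = b) (ht : b * t = a) : RtRel E a b := by
  intro e _
  constructor
  · intro h
    rw [← hs, ← mul_assoc, h]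
  · intro h
    rw [← ht, ← mul_assoc, h]

theorem exists_mul_eq_of_htRel {S : Type*} [Semigroup S] {E : Set S} (hEI : EIEhresmann E)
    {e u : S} (he : e ∈ E) (hee : e * e = e) (hu : HtRel E u e) : ∃ v, u * v = e := by
  obtain ⟨-, w, hw, hw_one, hw_inv⟩ := hEI e he
  have hwe : w = e :=
    calc w = w * e := ((hw.1 e he).mpr hee).symm
      _ = e := (hw_one e ⟨fun _ _ => Iff.rfl, fun _ _ => Iff.rfl⟩).1
  obtain ⟨v, -, huv, -⟩ := hw_inv u hu
  exact ⟨v, huv.trans hwe⟩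

namespace Ehresmann

variable {S : Type*} [Semigroup S] {E : Set S} (M : Ehresmann S E)

theorem star_of_mem {e : S} (he : e ∈ E) : M.star e = e :=
  (M.star_unique e e he fun _ _ => Iff.rfl).symm

theorem mul_star (a : S) : a * M.star a = a :=
  (M.star_lt a _ (M.star_mem a)).mpr (M.idem _ (M.star_mem a))

theorem plus_mul (a : S) : M.plus a * a = a :=
  (M.plus_rt a _ (M.plus_mem a)).mpr (M.idem _ (M.plus_mem a))

theorem star_mul_mul_star (a b : S) : M.star (a * b) * M.star b = M.star (a * b) :=
  (M.star_lt (a * b) _ (M.star_mem b)).mp (by rw [mul_assoc, mul_star])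

theorem plus_eq_of_rtRel {a b : S} (h : RtRel E a b) : M.plus a = M.plus b :=
  (M.plus_unique a _ (M.plus_mem b) fun e he => (h e he).trans (M.plus_rt b e he)).symm

theorem htRel_of_star_eq_of_plus_eq {a e : S} (hs : M.star a = e) (hp : M.plus a = e) :
    HtRel E a e :=
  ⟨hs ▸ M.star_lt a, hp ▸ M.plus_rt a⟩

theorem star_mul_eq_mul_star (hRR : RightRestriction M) (a b : S) :
    M.star a * b = b * M.star (a * b) := by
  rw [hRR _ (M.star_mem a) b, ← M.star_congr]

theorem star_mul_of_mul_self (hRR : RightRestriction M) {k : S} (hk : k * k = k) :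
    M.star k * k = k := by
  rw [M.star_mul_eq_mul_star hRR, hk, mul_star]

theorem exists_mul_eq_plus (hRR : RightRestriction M) (hEI : EIEhresmann E) {a b : S}
    (hb : a * b * a = a) : ∃ t, a * t = M.plus a := by
  set p := M.plus a
  set k := a * b
  have hk : k * k = k := by rw [← mul_assoc, hb]
  have hk_plus : M.plus k = p := M.plus_eq_of_rtRel (rtRel_of_mul_eq hb rfl)
  have hpk : p * k = k := hk_plus ▸ M.plus_mul k
  have hu_plus : M.plus (k * p) = p := by
    rw [← hk_plus]
    exact M.plus_eq_of_rtRel (rtRel_of_mul_eq (s := k) (by rw [mul_assoc, hk_plus, hpk, hk]) rfl)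
  have hu_star : M.star (k * p) = p := by
    have hsp : M.star k * p = p := by
      rw [← hk_plus]
      exact (M.plus_rt k _ (M.star_mem k)).mp (M.star_mul_of_mul_self hRR hk)
    rw [M.star_congr, hsp, M.star_of_mem (M.plus_mem a)]
  obtain ⟨v, hv⟩ := exists_mul_eq_of_htRel hEI (M.plus_mem a) (M.idem _ (M.plus_mem a))
    (M.htRel_of_star_eq_of_plus_eq hu_star hu_plus)
  exact ⟨b * p * v, by simp only [← mul_assoc]; exact hv⟩

def toPFun (a : S) : S →. S :=
  PFun.res (a * ·) {x | M.star a * x = x}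

theorem mem_toPFun {a x y : S} : y ∈ M.toPFun a x ↔ M.star a * x = x ∧ a * x = y :=
  PFun.mem_res _ _ _ _

theorem dom_toPFun (a : S) : (M.toPFun a).Dom = {x | M.star a * x = x} := by
  ext x
  simp [PFun.mem_dom, mem_toPFun]

theorem ran_toPFun {a t : S} (ht : a * t = M.plus a) :
    (M.toPFun a).ran = {x | M.plus a * x = x} := by
  ext x
  simp only [PFun.ran, Set.mem_ofPred_eq, mem_toPFun]
  constructor
  · rintro ⟨z, -, rfl⟩
    rw [← mul_assoc, plus_mul]
  · intro hx
    refine ⟨M.star a * (t * x), ?_, ?_⟩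
    · rw [← mul_assoc, M.idem _ (M.star_mem a)]
    · rw [← mul_assoc, mul_star, ← mul_assoc, ht, hx]

theorem toPFun_of_mem {e : S} (he : e ∈ E) : M.toPFun e = PFun.res id {x | e * x = x} := by
  refine PFun.ext fun x y => ?_
  rw [mem_toPFun, PFun.mem_res, M.star_of_mem he]
  constructor
  · rintro ⟨hx, rfl⟩
    exact ⟨hx, hx.symm⟩
  · rintro ⟨hx, rfl⟩
    exact ⟨hx, hx⟩

theorem toPFun_star (a : S) : M.toPFun (M.star a) = PFun.res id (M.toPFun a).Dom := by
  rw [M.toPFun_of_mem (M.star_mem a), dom_toPFun]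

theorem toPFun_plus {a t : S} (ht : a * t = M.plus a) :
    M.toPFun (M.plus a) = PFun.res id (M.toPFun a).ran := by
  rw [M.toPFun_of_mem (M.plus_mem a), M.ran_toPFun ht]

theorem toPFun_injective : Function.Injective M.toPFun := by
  have self_mem (a : S) : a ∈ M.toPFun a (M.star a) :=
    M.mem_toPFun.mpr ⟨M.idem _ (M.star_mem a), M.mul_star a⟩
  intro a b hab
  obtain ⟨hba, hb⟩ := M.mem_toPFun.mp (hab ▸ self_mem a)
  obtain ⟨hab', ha⟩ := M.mem_toPFun.mp (hab ▸ self_mem b)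
  have hstar : M.star a = M.star b :=
    calc M.star a = M.star b * M.star a := hba.symm
      _ = M.star a * M.star b := M.comm _ (M.star_mem b) _ (M.star_mem a)
      _ = M.star b := hab'
  rw [← hb, hstar, mul_star]

theorem toPFun_mul (hRR : RightRestriction M) (a b : S) :
    M.toPFun (a * b) = (M.toPFun a).comp (M.toPFun b) := by
  refine PFun.ext fun x y => ?_
  change _ ↔ y ∈ Part.bind (M.toPFun b x) fun z => M.toPFun a z
  simp only [Part.mem_bind_iff, mem_toPFun]
  constructor
  · rintro ⟨hx, rfl⟩
    have hbx : M.star b * x = x := by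
      rw [← hx, ← mul_assoc, M.comm _ (M.star_mem b) _ (M.star_mem _), star_mul_mul_star]
    refine ⟨b * x, ⟨hbx, rfl⟩, ?_, (mul_assoc a b x).symm⟩
    rw [← mul_assoc, M.star_mul_eq_mul_star hRR, mul_assoc, hx]
  · rintro ⟨_, ⟨hbx, rfl⟩, habx, rfl⟩
    have hstar : M.star (a * b * x) = M.star x := by
      rw [mul_assoc, M.star_congr a, habx, M.star_congr b, hbx]
    exact ⟨by rw [M.star_mul_eq_mul_star hRR, hstar, mul_star], mul_assoc a b x⟩

end Ehresmann

theorem stmt6_general {S : Type*} [Semigroup S] (E : Set S) (M : Ehresmann S E)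
    (hRR : RightRestriction M) (hEI : EIEhresmann E)
    (hreg : ∀ a : S, ∃ b : S, a * b * a = a) :
    ∃ Φ : S → (S →. S), Function.Injective Φ ∧
      (∀ a b : S, Φ (a * b) = (Φ a).comp (Φ b)) ∧
      (∀ a : S, Φ (M.star a) = PFun.res id (Φ a).Dom) ∧
      (∀ a : S, Φ (M.plus a) = PFun.res id (Φ a).ran) := by
  refine ⟨M.toPFun, M.toPFun_injective, M.toPFun_mul hRR, M.toPFun_star, fun a => ?_⟩
  obtain ⟨b, hb⟩ := hreg a
  obtain ⟨t, ht⟩ := M.exists_mul_eq_plus hRR hEI hb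
  exact M.toPFun_plus ht

/-- A finite regular right restriction EI-Ehresmann semigroup embeds, as a
bi-unary semigroup, into the monoid of partial functions on its underlying set:
`Φ(ab) = Φ(a) ∘ Φ(b)`, `Φ(a*)` is the partial identity on the domain of `Φ(a)`, and
`Φ(a⁺)` is the partial identity on the range of `Φ(a)`. -/
theorem stmt6 {S : Type*} [Semigroup S] [Finite S] (E : Set S) (M : Ehresmann S E)
    (hRR : RightRestriction M) (hEI : EIEhresmann E)
    (hreg : ∀ a : S, ∃ b : S, a * b * a = a) :
    ∃ Φ : S → (S →. S), Function.Injective Φ ∧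
      (∀ a b : S, Φ (a * b) = (Φ a).comp (Φ b)) ∧
      (∀ a : S, Φ (M.star a) = PFun.res id (Φ a).Dom) ∧
      (∀ a : S, Φ (M.plus a) = PFun.res id (Φ a).ran) :=
  stmt6_general E M hRR hEI hreg
end

section
/- Let S be a finite right restriction EI-Ehresmann semigroup and let e ∈ E. If f ∈ S is an idempotent that is Green's L-equivalent to e, then f = e; that is, e is the only idempotent in its Green's L-class. -/
/-- In a finite right restriction EI-Ehresmann semigroup, every projection
`e ∈ E` is the only idempotent in its Green's `L`-class. -/
theorem stmt9 {S : Type*} [Semigroup S] [Finite S] (E : Set S) (M : Ehresmann S E)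
    (hRR : RightRestriction M) (hEI : EIEhresmann E)
    (e : S) (he : e ∈ E) (f : S) (hf : f * f = f) (hL : GreenL f e) :
    f = e := by
  -- e is in the L-class set of f, and f in that of e
  have hef : e = f ∨ ∃ s, s * f = e := by
    have : e ∈ insert f {x : S | ∃ s, s * f = x} := by
      rw [hL]; exact Set.mem_insert _ _
    rcases this with h | ⟨s, hs⟩
    · exact Or.inl h
    · exact Or.inr ⟨s, hs⟩
  have hfe : f = e ∨ ∃ t, t * e = f := by
    have : f ∈ insert e {x : S | ∃ s, s * e = x} := by
      rw [← hL]; exact Set.mem_insert _ _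
    rcases this with h | ⟨t, ht⟩
    · exact Or.inl h
    · exact Or.inr ⟨t, ht⟩
  rcases hfe with h | ⟨t, ht⟩
  · exact h
  rcases hef with h | ⟨s, hs⟩
  · exact h.symm
  have hee : e * e = e := M.idem e he
  -- e * f = e
  have hef' : e * f = e := by
    calc e * f = s * f * f := by rw [hs]
    _ = s * (f * f) := mul_assoc _ _ _
    _ = s * f := by rw [hf]
    _ = e := hs
  -- star e = e
  have hstar : M.star e = e := by
    have := M.star_unique e e he (fun g hg => Iff.rfl)
    exact this.symm
  -- right restriction: e * f = f * star (e * f)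
  have h1 : e * f = f * M.star (e * f) := hRR e he f
  rw [hef', hstar] at h1
  -- so e = f * e; but f * e = f
  have hfe' : f * e = f := by
    calc f * e = t * e * e := by rw [ht]
    _ = t * (e * e) := mul_assoc _ _ _
    _ = t * e := by rw [hee]
    _ = f := ht
  rw [hfe'] at h1
  exact h1.symm
end

section
/- Let S be a finite right restriction EI-Ehresmann semigroup. Then for every regular element a ∈ S, the projection a⁺ is the unique element of E that is Green's R-equivalent to a; in particular, every regular R-class of S contains exactly one projection. -/
private def eseq {S : Type*} [Semigroup S] (st : S → S) (x : S) : ℕ → S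
  | 0 => x
  | n + 1 => st (eseq st x n) * eseq st x n

/-- In a finite right restriction EI-Ehresmann semigroup, for every regular
element `a`, the projection `a⁺` is the unique element of `E` that is Green's
`R`-equivalent to `a`. -/
theorem stmt10 {S : Type*} [Semigroup S] [Finite S] (E : Set S) (M : Ehresmann S E)
    (hRR : RightRestriction M) (hEI : EIEhresmann E) :
    ∀ a : S, (∃ b, a * b * a = a) →
      GreenR a (M.plus a) ∧ ∀ e ∈ E, GreenR a e → e = M.plus a := by
  -- generic consequences of the axioms
  have hE_star : ∀ c ∈ E, M.star c = c := fun c hc =>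
    (M.star_unique c c hc (fun e _ => Iff.rfl)).symm
  have hE_plus : ∀ c ∈ E, M.plus c = c := fun c hc =>
    (M.plus_unique c c hc (fun e _ => Iff.rfl)).symm
  have hstar_self : ∀ c : S, c * M.star c = c := fun c =>
    (M.star_lt c (M.star c) (M.star_mem c)).mpr (M.idem _ (M.star_mem c))
  have hplus_self : ∀ c : S, M.plus c * c = c := fun c =>
    (M.plus_rt c (M.plus c) (M.plus_mem c)).mpr (M.idem _ (M.plus_mem c))
  have key : ∀ v c : S, v * c = c → M.star v * c = c := by
    intro v c hvc
    have h1 := hRR (M.star v) (M.star_mem v) c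
    have h2 : M.star (M.star v * c) = M.star c := by
      rw [← M.star_congr v c, hvc]
    rw [h1, h2, hstar_self]
  intro a ⟨b, hab⟩
  have hPE : M.plus a ∈ E := M.plus_mem a
  have hPa : M.plus a * a = a := hplus_self a
  set P := M.plus a with hP
  set x0 := a * b * P with hxdef
  have hx_a : x0 * a = a := by
    rw [hxdef, mul_assoc, hPa, hab]
  have hPx : P * x0 = x0 := by
    rw [hxdef, ← mul_assoc, ← mul_assoc, hPa]
  have hxx : x0 * x0 = x0 := by
    conv_lhs => rw [hxdef]
    rw [← mul_assoc, ← mul_assoc, hx_a, hxdef]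
  have hx_plus : M.plus x0 = P := by
    have h := M.plus_congr (a * b) a
    rw [hab] at h
    exact h.symm
  have hxP : x0 * M.plus x0 = x0 := by
    rw [hx_plus, hxdef, mul_assoc, M.idem P hPE]
  set u : ℕ → S := eseq M.star x0 with hu
  have husucc : ∀ n, u (n + 1) = M.star (u n) * u n := fun n => rfl
  have I1 : ∀ n, u n * a = a := by
    intro n; induction n with
    | zero => exact hx_a
    | succ n ih =>
      rw [husucc, mul_assoc, ih]
      exact key (u n) a ih
  have I2 : ∀ n, P * u n = u n := by
    intro n; induction n with
    | zero => exact hPx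
    | succ n ih =>
      rw [husucc, ← mul_assoc, M.comm P hPE (M.star (u n)) (M.star_mem (u n)),
        mul_assoc, ih]
  have I3 : ∀ n, u n * u n = u n := by
    intro n; induction n with
    | zero => exact hxx
    | succ n ih =>
      rw [husucc, mul_assoc, ← mul_assoc (u n), hstar_self, ih]
  have I4 : ∀ n, u n * M.plus (u n) = u n := by
    intro n; induction n with
    | zero => exact hxP
    | succ n ih =>
      have h : M.plus (M.star (u n) * u n) = M.star (u n) * M.plus (u n) := by
        rw [M.plus_congr (M.star (u n)) (u n)]
        exact hE_plus _ (M.mul_mem _ (M.star_mem _) _ (M.plus_mem _))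
      rw [husucc, h, mul_assoc, ← mul_assoc (u n), hstar_self, ih]
  have hRRn : ∀ n, u (n + 1) = u n * M.star (u (n + 1)) := by
    intro n
    have h := hRR (M.star (u n)) (M.star_mem (u n)) (u n)
    exact h
  have I5 : ∀ n, ∃ t, a * t = u n := by
    intro n; induction n with
    | zero => exact ⟨b * P, by show a * (b * P) = x0; rw [hxdef, mul_assoc]⟩
    | succ n ih =>
      obtain ⟨t, ht⟩ := ih
      refine ⟨t * M.star (u (n + 1)), ?_⟩
      rw [← mul_assoc, ht, ← hRRn]
  have hdesc : ∀ n, M.star (u n) * M.star (u (n + 1)) = M.star (u (n + 1)) := by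
    intro n
    have h : M.star (u (n + 1)) = M.star (u n) * M.star (u (n + 1)) := by
      calc M.star (u (n + 1)) = M.star (u n * M.star (u (n + 1))) := by rw [← hRRn]
        _ = M.star (M.star (u n) * M.star (u (n + 1))) := M.star_congr _ _
        _ = M.star (u n) * M.star (u (n + 1)) :=
            hE_star _ (M.mul_mem _ (M.star_mem _) _ (M.star_mem _))
    exact h.symm
  have htrans : ∀ m n, m ≤ n → M.star (u m) * M.star (u n) = M.star (u n) := by
    intro m n h
    induction n, h using Nat.le_induction with
    | base => exact M.idem _ (M.star_mem _)
    | succ n hmn ih =>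
      rw [← hdesc n, ← mul_assoc, ih]
  obtain ⟨m, n, hmn, hs⟩ : ∃ m n, m < n ∧ M.star (u m) = M.star (u n) := by
    obtain ⟨i, j, hne, hij⟩ :=
      Finite.exists_ne_map_eq_of_infinite (fun n => M.star (u n))
    rcases hne.lt_or_gt with h | h
    · exact ⟨i, j, h, hij⟩
    · exact ⟨j, i, h, hij.symm⟩
  have hstep : M.star (u (m + 1)) = M.star (u m) := by
    have h2 := htrans (m + 1) n hmn
    rw [← hs] at h2
    calc M.star (u (m + 1)) = M.star (u m) * M.star (u (m + 1)) := (hdesc m).symm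
      _ = M.star (u (m + 1)) * M.star (u m) :=
          M.comm _ (M.star_mem _) _ (M.star_mem _)
      _ = M.star (u m) := h2
  set w := u (m + 1) with hw
  have hsw : M.star w * w = w := by
    rw [hw, hstep, husucc, ← mul_assoc, M.idem _ (M.star_mem _)]
  have hw_idem : w * w = w := I3 (m + 1)
  have hw_p : w * M.plus w = w := I4 (m + 1)
  have hpE : M.plus w ∈ E := M.plus_mem w
  have hsp_p : M.star w * M.plus w = M.plus w :=
    (M.plus_rt w (M.star w) (M.star_mem w)).mp hsw
  have hsp_s : M.star w * M.plus w = M.star w :=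
    (M.star_lt w (M.plus w) hpE).mp hw_p
  have hsp : M.star w = M.plus w := by rw [← hsp_s, hsp_p]
  have hHt : HtRel E w (M.plus w) := ⟨hsp ▸ M.star_lt w, M.plus_rt w⟩
  obtain ⟨hGmul, g1, hg1, hgid, hginv⟩ := hEI (M.plus w) hpE
  have idemeq : ∀ c, HtRel E c (M.plus w) → c * c = c → c = g1 := by
    intro c hc hcc
    obtain ⟨v, hv, hcv, hvc⟩ := hginv c hc
    calc c = g1 * c := ((hgid c hc).1).symm
      _ = v * c * c := by rw [hvc]
      _ = v * c := by rw [mul_assoc, hcc]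
      _ = g1 := hvc
  have hrefl : HtRel E (M.plus w) (M.plus w) :=
    ⟨fun e _ => Iff.rfl, fun e _ => Iff.rfl⟩
  have hw_eq_p : w = M.plus w :=
    (idemeq w hHt hw_idem).trans (idemeq (M.plus w) hrefl (M.idem _ hpE)).symm
  have hwE : w ∈ E := by rw [hw_eq_p]; exact hpE
  have hwa : w * a = a := I1 (m + 1)
  have hwP : w * P = P := (M.plus_rt a w hwE).mp hwa
  have hPw : P * w = w := I2 (m + 1)
  have hPeqw : P = w := by
    calc P = w * P := hwP.symm
      _ = P * w := M.comm w hwE P hPE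
      _ = w := hPw
  obtain ⟨t, hat⟩ := I5 (m + 1)
  have hatP : a * t = P := by rw [hat, hPeqw]
  have hmain : GreenR a P := by
    show insert a {y : S | ∃ s, a * s = y} = insert P {y : S | ∃ s, P * s = y}
    ext y
    simp only [Set.mem_insert_iff, Set.mem_setOf_eq]
    constructor
    · rintro (h | ⟨s, h⟩)
      · exact Or.inr ⟨a, hPa.trans h.symm⟩
      · exact Or.inr ⟨a * s, by rw [← mul_assoc, hPa, h]⟩
    · rintro (h | ⟨s, h⟩)
      · exact Or.inr ⟨t, hatP.trans h.symm⟩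
      · exact Or.inr ⟨t * s, by rw [← mul_assoc, hatP, h]⟩
  refine ⟨hmain, ?_⟩
  intro e he hGe
  have ha_mem : a ∈ insert e {y : S | ∃ s, e * s = y} := by
    rw [← hGe]; exact Set.mem_insert a _
  have he_mem : e ∈ insert a {y : S | ∃ s, a * s = y} := by
    rw [hGe]; exact Set.mem_insert e _
  simp only [Set.mem_insert_iff, Set.mem_setOf_eq] at ha_mem he_mem
  have hea : e * a = a := by
    rcases ha_mem with h | ⟨s, hs⟩
    · rw [h]; exact M.idem e he
    · rw [← hs, ← mul_assoc, M.idem e he]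
  have heP : e * P = P := (M.plus_rt a e he).mp hea
  rcases he_mem with h | ⟨s, hs⟩
  · have haE : e ∈ E := he
    rw [h] at haE
    rw [h, hP]
    exact (hE_plus a haE).symm
  · have hPe : P * e = e := by rw [← hs, ← mul_assoc, hPa]
    calc e = P * e := hPe.symm
      _ = e * P := (M.comm e he P hPE).symm
      _ = P := heP
end

section
/- Let S be a semigroup and E ⊆ S a set of idempotents such that the relation Lt is a right congruence (a Lt b implies ac Lt bc for all c ∈ S). Let e ∈ E, let x ∈ S with x Lt e, and let g ∈ S be Green's H-equivalent to e. Then x·g Lt e. -/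
/-- Green's `H`-relation. -/
def GreenH {S : Type*} [Semigroup S] (a b : S) : Prop :=
  GreenR a b ∧ GreenL a b

/-- Let `S` be a semigroup and `E` a set of idempotents such that `Lt` is a
right congruence. If `e ∈ E`, `x Lt e`, and `g` is Green's `H`-equivalent to `e`, then
`x g Lt e`. -/
theorem stmt12 {S : Type*} [Semigroup S] (E : Set S) (hE : ∀ e ∈ E, e * e = e)
    (hcong : ∀ a b c : S, LtRel E a b → LtRel E (a * c) (b * c))
    (e : S) (he : e ∈ E) (x : S) (hx : LtRel E x e) (g : S) (hg : GreenH g e) :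
    LtRel E (x * g) e := by
  obtain ⟨hR, hL⟩ := hg
  -- g ∈ insert e {e*s} via GreenR
  have hgmem : g = e ∨ ∃ s, e * s = g := by
    have : g ∈ insert e {x : S | ∃ s, e * s = x} := by
      rw [← hR]; exact Set.mem_insert _ _
    simpa [Set.mem_insert_iff] using this
  have heg : e * g = g := by
    rcases hgmem with h' | ⟨s, rfl⟩
    · rw [h']; exact hE e he
    · rw [← mul_assoc, hE e he]
  -- g = e or g = s * e via GreenL
  have hgL : g = e ∨ ∃ s, s * e = g := by
    have : g ∈ insert e {x : S | ∃ s, s * e = x} := by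
      rw [← hL]; exact Set.mem_insert _ _
    simpa [Set.mem_insert_iff] using this
  have heL : e = g ∨ ∃ s, s * g = e := by
    have : e ∈ insert g {x : S | ∃ s, s * g = x} := by
      rw [hL]; exact Set.mem_insert _ _
    simpa [Set.mem_insert_iff] using this
  have hge : LtRel E g e := by
    intro f hf
    constructor
    · intro h
      rcases heL with h' | ⟨s, rfl⟩
      · rw [h']; exact h
      · rw [mul_assoc, h]
    · intro h
      rcases hgL with h' | ⟨s, rfl⟩
      · rw [h']; exact h
      · rw [mul_assoc, h]
  have hxg : LtRel E (x * g) (e * g) := hcong x e g hx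
  intro f hf
  rw [hxg f hf, heg]
  exact hge f hf
end

section
/- Let S be an E-Ehresmann semigroup and s ∈ S. Define x ≤ₗ y on S by x = y·x*. Then the map F(e) = s·e is an order isomorphism from {e ∈ E | e ≤ s*} (with the semilattice order on E) onto {x ∈ S | x ≤ₗ s} (with ≤ₗ), with inverse G(x) = x*. Explicitly: (i) if e₁ ≤ e₂ ≤ s* in E then s·e₁ ≤ₗ s·e₂; (ii) if x₁ ≤ₗ x₂ ≤ₗ s then x₁* ≤ x₂*; (iii) (s·e)* = e for every e ∈ E with e ≤ s*; (iv) s·x* = x for every x ∈ S with x ≤ₗ s. -/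
lemma star_of_mem_s14 {S : Type*} [Semigroup S] {E : Set S} (M : Ehresmann S E)
    {f : S} (hf : f ∈ E) : M.star f = f :=
  (M.star_unique f f hf (fun _ _ => Iff.rfl)).symm

lemma star_eq_of_le {S : Type*} [Semigroup S] {E : Set S} (M : Ehresmann S E)
    (s : S) {e : S} (he : e ∈ E) (hle : e * M.star s = e) : M.star (s * e) = e := by
  have h1 : M.star (s * e) = M.star (M.star s * e) := M.star_congr s e
  have h2 : M.star s * e = e := by
    rw [M.comm _ (M.star_mem s) e he]; exact hle
  rw [h1, h2, star_of_mem_s14 M he]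

/-- In an `E`-Ehresmann semigroup, `F(e) = s e` is an order isomorphism from
`{e ∈ E | e ≤ s*}` onto `{x | x ≤ₗ s}` with inverse `G(x) = x*`, where `x ≤ₗ y` means
`x = y x*`. Explicitly: (i) it is order preserving; (ii) its inverse is order
preserving; (iii) `(s e)* = e` for `e ∈ E` with `e ≤ s*`;
(iv) `s x* = x` for `x ≤ₗ s`. -/
theorem stmt14 {S : Type*} [Semigroup S] (E : Set S) (M : Ehresmann S E) (s : S) :
    (∀ e₁ ∈ E, ∀ e₂ ∈ E, e₁ * e₂ = e₁ → e₂ * M.star s = e₂ →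
        s * e₁ = (s * e₂) * M.star (s * e₁)) ∧
    (∀ x₁ x₂ : S, x₁ = x₂ * M.star x₁ → x₂ = s * M.star x₂ →
        M.star x₁ * M.star x₂ = M.star x₁) ∧
    (∀ e ∈ E, e * M.star s = e → M.star (s * e) = e) ∧
    (∀ x : S, x = s * M.star x → s * M.star x = x) := by
  
  refine ⟨?_, ?_, fun e he h => star_eq_of_le M s he h, fun x h => h.symm⟩
  · intro e₁ he₁ e₂ he₂ h12 h2s
    have h1s : e₁ * M.star s = e₁ := by
      calc e₁ * M.star s = e₁ * e₂ * M.star s := by rw [h12]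
        _ = e₁ * (e₂ * M.star s) := mul_assoc _ _ _
        _ = e₁ * e₂ := by rw [h2s]
        _ = e₁ := h12
    rw [star_eq_of_le M s he₁ h1s]
    rw [mul_assoc, M.comm _ he₂ _ he₁, h12]
  · intro x₁ x₂ h1 _
    have hmem : M.star x₂ * M.star x₁ ∈ E :=
      M.mul_mem _ (M.star_mem x₂) _ (M.star_mem x₁)
    have key : M.star x₁ = M.star x₂ * M.star x₁ := by
      conv_lhs => rw [h1]
      rw [M.star_congr, star_of_mem_s14 M hmem]
    rw [M.comm _ (M.star_mem x₁) _ (M.star_mem x₂), ← key]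
end

section
/- Let S be a finite right restriction E-Ehresmann semigroup and let s, m ∈ S satisfy s*·m⁺ = m⁺. Then there exists a unique t ∈ S with t ≤ₗ s and t* = m⁺, and this t satisfies t·m = s·m. -/
/-- In a finite right restriction `E`-Ehresmann semigroup, if
`s* m⁺ = m⁺` then there is a unique `t ≤ₗ s` (i.e. `t = s t*`) with `t* = m⁺`,
and this `t` satisfies `t m = s m`. -/
theorem stmt15 {S : Type*} [Semigroup S] [Finite S] (E : Set S) (M : Ehresmann S E)
    (hRR : RightRestriction M) (s m : S) (h : M.star s * M.plus m = M.plus m) :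
    (∃! t : S, t = s * M.star t ∧ M.star t = M.plus m) ∧
    (∀ t : S, t = s * M.star t → M.star t = M.plus m → t * m = s * m) := by
  have he : M.plus m ∈ E := M.plus_mem m
  have hse : M.star (M.plus m) = M.plus m :=
    (M.star_unique (M.plus m) (M.plus m) he (fun e _ => Iff.rfl)).symm
  have hstar : M.star (s * M.plus m) = M.plus m := by
    rw [M.star_congr, h, hse]
  have hem : M.plus m * m = m := by
    have := (M.plus_rt m (M.plus m) he).mpr (M.idem _ he)
    exact this
  constructor
  · refine ⟨s * M.plus m, ⟨by rw [hstar], hstar⟩, ?_⟩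
    rintro t ⟨ht1, ht2⟩
    rw [ht1, ht2]
  · intro t ht1 ht2
    rw [ht1, ht2, mul_assoc, hem]
end
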